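/- arXiv:2002.09718 — 3 statements merged into one kernel-verified Lean document; each statement's English description precedes it below -/
import Mathlib

section
/- Let φ: [0,∞) → R be convex, monotonically nondecreasing, and suppose φ(ξ) ≥ μ ξ² − φ₀ for all ξ ≥ 0, for some μ > 0 and φ₀ ∈ R, where ξ₀ ≥ 0 is a finite point with φ(ξ₀) = μ ξ₀² − φ₀. Then for every ν ≥ 0 and every ξ ≥ 0 with ν ∈ ∂φ(ξ), one has ξ ≤ ν/μ + ξ₀. -/
noncomputable section

/-- If `φ : [0,∞) → ℝ` is convex, nondecreasing, satisfies the quadratic growth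
`φ(ξ) ≥ μξ² − φ₀` with equality at some finite `ξ₀ ≥ 0`, then any `ξ ≥ 0` with
`ν ∈ ∂φ(ξ)` (for `ν ≥ 0`) satisfies `ξ ≤ ν/μ + ξ₀`. -/
theorem subgradient_bound (φ : ℝ → ℝ) (μ φ₀ ξ₀ : ℝ) (hμ : 0 < μ)
    (hconv : ConvexOn ℝ (Set.Ici (0 : ℝ)) φ)
    (hmono : MonotoneOn φ (Set.Ici (0 : ℝ)))
    (hgrow : ∀ ξ : ℝ, 0 ≤ ξ → μ * ξ ^ 2 - φ₀ ≤ φ ξ)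
    (hξ₀ : 0 ≤ ξ₀) (heq : φ ξ₀ = μ * ξ₀ ^ 2 - φ₀) :
    ∀ ν ξ : ℝ, 0 ≤ ν → 0 ≤ ξ →
      (∀ ζ : ℝ, 0 ≤ ζ → φ ξ + ν * (ζ - ξ) ≤ φ ζ) →
      ξ ≤ ν / μ + ξ₀ := by
  intro ν ξ hν hξ hsub
  have h1 := hsub ξ₀ hξ₀
  have h2 := hgrow ξ hξ
  rcases le_or_gt ξ ξ₀ with h | h
  · have : 0 ≤ ν / μ := div_nonneg hν hμ.le
    linarith
  · have key : μ * (ξ + ξ₀) ≤ ν := by nlinarith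
    rw [← sub_le_iff_le_add, le_div_iff₀ hμ]
    nlinarith
end
end

section
/- (Support optimality condition.) Let f: R^d → R be convex and differentiable, P = conv{p₁,…,p_m} with 0 ∈ P, and φ: [0,∞) → R convex, monotonically nondecreasing. Let x* minimize f(x) + φ(κ_P(x)) and write x* = Σ_i c_i p_i with c_i ≥ 0 and Σ_i c_i = κ_P(x*). Then for every index i with c_i > 0, one has ⟨−∇f(x*), p_i⟩ = σ_P(−∇f(x*)). -/
open scoped RealInnerProductSpace Pointwise
noncomputable section

/-- Minkowski gauge `κ_P(x) = inf {μ ≥ 0 : x ∈ μ • P}` (real-valued). -/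
def gaugeR {d : ℕ} (P : Set (EuclideanSpace ℝ (Fin d)))
    (x : EuclideanSpace ℝ (Fin d)) : ℝ :=
  sInf {μ : ℝ | 0 ≤ μ ∧ x ∈ μ • P}

/-- Support function `σ_P(z) = sup_{s ∈ P} ⟨z, s⟩`. -/
def suppFn {d : ℕ} (P : Set (EuclideanSpace ℝ (Fin d)))
    (z : EuclideanSpace ℝ (Fin d)) : ℝ :=
  sSup ((fun s => ⟪z, s⟫) '' P)

/-!
Moving mass `t ∈ [0, cᵢ]` from the atom `pᵢ` to an atom `pⱼ` of the gauge-attaining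
decomposition keeps the total weight, so `κ_P` does not increase and, `φ` being nondecreasing,
neither does the penalty. Hence `f` cannot decrease along the segment from `x*` to
`x* + cᵢ (pⱼ - pᵢ)`, and the first-order condition gives `⟪∇f(x*), pⱼ - pᵢ⟫ ≥ 0`: the atom `pᵢ`
maximizes `⟪-∇f(x*), ·⟫` over all atoms, hence over their convex hull `P`.
-/

theorem inner_gradient_nonneg_of_isMinOn_segment {F : Type*} [NormedAddCommGroup F]
    [InnerProductSpace ℝ F] [CompleteSpace F] {f : F → ℝ} {g x v : F}
    (hf : HasGradientAt f g x) (hmin : IsMinOn f (segment ℝ x (x + v)) x) : 0 ≤ ⟪g, v⟫ := by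
  simpa using hmin.localize.hasFDerivWithinAt_nonneg hf.hasFDerivAt.hasFDerivWithinAt
    (mem_posTangentConeAt_of_segment_subset subset_rfl)

section Gauge

variable {d : ℕ} {P : Set (EuclideanSpace ℝ (Fin d))}

theorem gaugeR_nonneg (x : EuclideanSpace ℝ (Fin d)) : 0 ≤ gaugeR P x :=
  Real.sInf_nonneg fun _ hμ => hμ.1

theorem gaugeR_le_of_mem_smul {x : EuclideanSpace ℝ (Fin d)} {μ : ℝ} (hμ : 0 ≤ μ)
    (hx : x ∈ μ • P) : gaugeR P x ≤ μ :=
  csInf_le ⟨0, fun _ hν => hν.1⟩ ⟨hμ, hx⟩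

variable {ι : Type*} [Fintype ι] {p : ι → EuclideanSpace ℝ (Fin d)}

theorem gaugeR_sum_smul_le (hP : Convex ℝ P) (hp : ∀ k, p k ∈ P) {c : ι → ℝ}
    (hc : ∀ k, 0 ≤ c k) (hsum : 0 < ∑ k, c k) : gaugeR P (∑ k, c k • p k) ≤ ∑ k, c k := by
  refine gaugeR_le_of_mem_smul hsum.le ?_
  have hcenter := hP.centerMass_mem (fun k _ => hc k) hsum (fun k _ => hp k)
  convert Set.smul_mem_smul_set (a := ∑ k, c k) hcenter using 1
  rw [Finset.centerMass, smul_smul, mul_inv_cancel₀ hsum.ne', one_smul]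

theorem gaugeR_add_smul_sub_le [DecidableEq ι] (hP : Convex ℝ P) (hp : ∀ k, p k ∈ P)
    {c : ι → ℝ} (hc : ∀ k, 0 ≤ c k) {i : ι} (hci : 0 < c i) (j : ι) {t : ℝ}
    (ht₀ : 0 ≤ t) (ht : t ≤ c i) :
    gaugeR P (∑ k, c k • p k + t • (p j - p i)) ≤ ∑ k, c k := by
  set c' : ι → ℝ := c + Pi.single j t - Pi.single i t
  have hc' k : 0 ≤ c' k := by
    have hj : 0 ≤ (Pi.single j t : ι → ℝ) k := by rw [Pi.single_apply]; split_ifs <;> linarith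
    rcases eq_or_ne k i with rfl | hki
    · simp only [c', Pi.add_apply, Pi.sub_apply, Pi.single_eq_same]
      linarith
    · simp only [c', Pi.add_apply, Pi.sub_apply, Pi.single_eq_of_ne hki, sub_zero]
      linarith [hc k]
  have hsum : ∑ k, c' k = ∑ k, c k := by
    simp [c', Finset.sum_add_distrib, Finset.sum_sub_distrib]
  have hpoint : ∑ k, c' k • p k = ∑ k, c k • p k + t • (p j - p i) := by
    simp only [c', Pi.sub_apply, Pi.add_apply, Pi.single_apply, sub_smul, add_smul, ite_smul,
      zero_smul, Finset.sum_sub_distrib, Finset.sum_add_distrib, Finset.sum_ite_eq',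
      Finset.mem_univ, if_true, smul_sub]
    abel
  have hpos : 0 < ∑ k, c k :=
    hci.trans_le (Finset.single_le_sum (fun k _ => hc k) (Finset.mem_univ i))
  rw [← hpoint, ← hsum]
  exact gaugeR_sum_smul_le hP hp hc' (hsum ▸ hpos)

end Gauge

theorem suppFn_convexHull_eq_of_forall_inner_le {d : ℕ} {s : Set (EuclideanSpace ℝ (Fin d))}
    {z a : EuclideanSpace ℝ (Fin d)} (ha : a ∈ s) (hmax : ∀ b ∈ s, ⟪z, b⟫ ≤ ⟪z, a⟫) :
    suppFn (convexHull ℝ s) z = ⟪z, a⟫ := by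
  refine IsGreatest.csSup_eq ⟨⟨a, subset_convexHull ℝ s ha, rfl⟩, ?_⟩
  rintro _ ⟨b, hb, rfl⟩
  exact convexHull_min hmax (convex_halfSpace_le (innerₛₗ ℝ z).isLinear _) hb

theorem support_optimality_general {d m : ℕ} (p : Fin m → EuclideanSpace ℝ (Fin d))
    (f : EuclideanSpace ℝ (Fin d) → ℝ) (f' : EuclideanSpace ℝ (Fin d) → EuclideanSpace ℝ (Fin d))
    (φ : ℝ → ℝ) (xstar : EuclideanSpace ℝ (Fin d)) (c : Fin m → ℝ)
    (P : Set (EuclideanSpace ℝ (Fin d))) (hP : P = convexHull ℝ (Set.range p))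
    (hfgrad : ∀ x, HasGradientAt f (f' x) x)
    (hφmono : MonotoneOn φ (Set.Ici (0 : ℝ)))
    (hmin : ∀ y, f xstar + φ (gaugeR P xstar) ≤ f y + φ (gaugeR P y))
    (hc : ∀ i, 0 ≤ c i)
    (hdecomp : ∑ i, c i • p i = xstar)
    (hattain : ∑ i, c i = gaugeR P xstar) :
    ∀ i, 0 < c i → ⟪-(f' xstar), p i⟫ = suppFn P (-(f' xstar)) := by
  intro i hci
  subst hP hdecomp
  have hp k : p k ∈ convexHull ℝ (Set.range p) := subset_convexHull ℝ _ (Set.mem_range_self k)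
  have hdescent j : 0 ≤ ⟪f' (∑ k, c k • p k), p j - p i⟫ := by
    refine (mul_nonneg_iff_of_pos_left hci).1 ?_
    rw [← real_inner_smul_right]
    refine inner_gradient_nonneg_of_isMinOn_segment (hfgrad _) fun y hy => ?_
    rw [segment_eq_image'] at hy
    obtain ⟨θ, ⟨hθ₀, hθ₁⟩, rfl⟩ := hy
    simp only [add_sub_cancel_left, smul_smul, Set.mem_ofPred_eq]
    have hgauge := gaugeR_add_smul_sub_le (convex_convexHull ℝ _) hp hc hci j
      (mul_nonneg hθ₀ hci.le) (mul_le_of_le_one_left hci.le hθ₁)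
    have hpenalty := hφmono (gaugeR_nonneg _) (gaugeR_nonneg _) (hgauge.trans_eq hattain)
    have hopt := hmin (∑ k, c k • p k + (θ * c i) • (p j - p i))
    linarith
  refine (suppFn_convexHull_eq_of_forall_inner_le (Set.mem_range_self i) ?_).symm
  rintro _ ⟨j, rfl⟩
  have hj := hdescent j
  rw [inner_sub_right] at hj
  simp only [inner_neg_left]
  linarith

/-- Support optimality condition: if `x*` minimizes `f + φ ∘ κ_P` over `ℝ^d`, where
`P = conv{p₁, …, p_m} ∋ 0`, `f` is convex differentiable with gradient `f'`, and
`φ` is convex and nondecreasing on `[0,∞)`, then for any gauge-attaining conic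
decomposition `x* = Σ cᵢ pᵢ` (`cᵢ ≥ 0`, `Σ cᵢ = κ_P(x*)`), every atom `pᵢ` with
`cᵢ > 0` satisfies `⟨−∇f(x*), pᵢ⟩ = σ_P(−∇f(x*))`. -/
theorem support_optimality {d m : ℕ} (p : Fin m → EuclideanSpace ℝ (Fin d))
    (f : EuclideanSpace ℝ (Fin d) → ℝ) (f' : EuclideanSpace ℝ (Fin d) → EuclideanSpace ℝ (Fin d))
    (φ : ℝ → ℝ) (xstar : EuclideanSpace ℝ (Fin d)) (c : Fin m → ℝ)
    (P : Set (EuclideanSpace ℝ (Fin d))) (hP : P = convexHull ℝ (Set.range p))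
    (h0 : (0 : EuclideanSpace ℝ (Fin d)) ∈ P)
    (hfconv : ConvexOn ℝ Set.univ f)
    (hfgrad : ∀ x, HasGradientAt f (f' x) x)
    (hφconv : ConvexOn ℝ (Set.Ici (0 : ℝ)) φ)
    (hφmono : MonotoneOn φ (Set.Ici (0 : ℝ)))
    (hmin : ∀ y, f xstar + φ (gaugeR P xstar) ≤ f y + φ (gaugeR P y))
    (hc : ∀ i, 0 ≤ c i)
    (hdecomp : ∑ i, c i • p i = xstar)
    (hattain : ∑ i, c i = gaugeR P xstar) :
    ∀ i, 0 < c i → ⟪-(f' xstar), p i⟫ = suppFn P (-(f' xstar)) :=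
  support_optimality_general p f f' φ xstar c P hP hfgrad hφmono hmin hc hdecomp hattain
end
end

section
/- (Recursion implies O(1/t) rate.) Let (Δ_t)_{t≥1} be a nonnegative real sequence, θ_t = 2/(t+1), and suppose there exist constants A ≥ 0, B ≥ 0 such that for all t ≥ 1: Δ_{t+1} ≤ Δ_t − (2/3)θ_t Δ_t + θ_t²(A + B·Δ̄_t), where Δ̄_t := ((Σ_{u=1}^t u)^{-1} Σ_{u=1}^t u·√Δ_u)². Then there exists a constant G (depending on A, B, and finitely many initial values Δ_t) such that Δ_t ≤ G/t for all t ≥ 1. -/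
/-!
Choose `G ≥ 24 A` so large that `Δ_u ≤ G / u` on an initial segment `u ≤ N` with `N ≥ 96 B`,
and propagate the bound by strong induction. If `Δ_u ≤ G / u` for all `u ≤ t`, then every term
`u √Δ_u = √(u · u Δ_u)` is at most `√(t G)`, so `Δ̄_t ≤ 4 t G / (t + 1)² ≤ 4 G / t`; the recursion
then gives `Δ_{t+1} ≤ G / (t + 1)`, because the contraction `-(4/3) G / (t (t + 1))` gained from
`θ_t Δ_t` beats the error `θ_t² (A + 4 B G / t)` as soon as `G ≥ 24 A` and `t ≥ 96 B`.
-/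

open Finset

noncomputable section

lemma sum_Icc_one_natCast (t : ℕ) : ∑ u ∈ Icc 1 t, (u : ℝ) = t * (t + 1) / 2 := by
  induction t with
  | zero => simp
  | succ t ih =>
    rw [sum_Icc_succ_top (by omega), ih]
    push_cast
    ring

/-- The paper's `Δ̄_t`. -/
def weightedSqrtMeanSq (Δ : ℕ → ℝ) (t : ℕ) : ℝ :=
  ((∑ u ∈ Icc 1 t, (u : ℝ))⁻¹ * ∑ u ∈ Icc 1 t, (u : ℝ) * Real.sqrt (Δ u)) ^ 2

lemma weightedSqrtMeanSq_le {Δ : ℕ → ℝ} {G : ℝ} {t : ℕ} (hG : 0 ≤ G) (ht : 1 ≤ t)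
    (hΔ : ∀ u : ℕ, 1 ≤ u → u ≤ t → Δ u ≤ G / u) :
    weightedSqrtMeanSq Δ t ≤ 4 * G / t := by
  have hterm : ∀ u ∈ Icc 1 t, (u : ℝ) * Real.sqrt (Δ u) ≤ Real.sqrt (t * G) := by
    intro u hu
    obtain ⟨hu1, hut⟩ := mem_Icc.mp hu
    have hu0 : (0 : ℝ) < u := by exact_mod_cast hu1
    have huΔ : u * Δ u ≤ G := by
      have := hΔ u hu1 hut
      rwa [le_div_iff₀ hu0, mul_comm] at this
    have hutR : (u : ℝ) ≤ t := by exact_mod_cast hut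
    calc (u : ℝ) * Real.sqrt (Δ u) = Real.sqrt (u * (u * Δ u)) := by
          rw [← mul_assoc, ← sq, Real.sqrt_mul (sq_nonneg _), Real.sqrt_sq hu0.le]
      _ ≤ Real.sqrt (t * G) := Real.sqrt_le_sqrt (by nlinarith)
  have hsum : ∑ u ∈ Icc 1 t, (u : ℝ) * Real.sqrt (Δ u) ≤ t * Real.sqrt (t * G) := by
    simpa using sum_le_sum hterm
  set m := (∑ u ∈ Icc 1 t, (u : ℝ))⁻¹ * ∑ u ∈ Icc 1 t, (u : ℝ) * Real.sqrt (Δ u) with hm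
  have hm_nonneg : 0 ≤ m :=
    mul_nonneg (inv_nonneg.mpr (sum_nonneg fun _ _ => by positivity))
      (sum_nonneg fun _ _ => by positivity)
  have hm_le : m ≤ 2 * Real.sqrt (t * G) / (t + 1) := by
    rw [hm, sum_Icc_one_natCast]
    calc (t * (t + 1) / 2 : ℝ)⁻¹ * ∑ u ∈ Icc 1 t, (u : ℝ) * Real.sqrt (Δ u)
        ≤ (t * (t + 1) / 2 : ℝ)⁻¹ * (t * Real.sqrt (t * G)) := by gcongr
      _ = 2 * Real.sqrt (t * G) / (t + 1) := by field_simp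
  calc weightedSqrtMeanSq Δ t = m ^ 2 := rfl
    _ ≤ (2 * Real.sqrt (t * G) / (t + 1)) ^ 2 := pow_le_pow_left₀ hm_nonneg hm_le 2
    _ = 4 * t * G / (t + 1) ^ 2 := by
        rw [div_pow, mul_pow, Real.sq_sqrt (by positivity)]
        ring
    _ ≤ 4 * G / t := by
        rw [div_le_div_iff₀ (by positivity) (by positivity)]
        nlinarith [mul_nonneg hG (by positivity : (0 : ℝ) ≤ t)]

lemma le_div_succ_of_recursion {t A B G x D y : ℝ} (ht : 1 ≤ t) (hB : 0 ≤ B) (hG : 0 ≤ G)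
    (hAG : 24 * A ≤ G) (hBt : 96 * B ≤ t) (hx : x ≤ G / t) (hD : D ≤ 4 * G / t)
    (hy : y ≤ x - 2 / 3 * (2 / (t + 1)) * x + (2 / (t + 1)) ^ 2 * (A + B * D)) :
    y ≤ G / (t + 1) := by
  have hcoef : 0 ≤ 1 - 2 / 3 * (2 / (t + 1)) := by
    rw [sub_nonneg, ← le_div_iff₀' (by norm_num), div_le_iff₀ (by positivity)]
    linarith
  have hgap : 0 ≤ G * (t + 1) - (12 * A * t + 48 * B * G) := by
    nlinarith [mul_le_mul_of_nonneg_right hAG (by linarith : (0 : ℝ) ≤ t),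
      mul_le_mul_of_nonneg_right hBt hG]
  calc y ≤ x * (1 - 2 / 3 * (2 / (t + 1))) + (2 / (t + 1)) ^ 2 * (A + B * D) := by linarith
    _ ≤ G / t * (1 - 2 / 3 * (2 / (t + 1))) + (2 / (t + 1)) ^ 2 * (A + B * (4 * G / t)) := by
        gcongr
    _ = G / (t + 1) - (G * (t + 1) - (12 * A * t + 48 * B * G)) / (3 * t * (t + 1) ^ 2) := by
        field_simp
        ring
    _ ≤ G / (t + 1) := sub_le_self _ (by positivity)

lemma exists_forall_Icc_le_div (Δ : ℕ → ℝ) (N : ℕ) (c : ℝ) :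
    ∃ G, c ≤ G ∧ ∀ u : ℕ, 1 ≤ u → u ≤ N → Δ u ≤ G / u := by
  obtain ⟨M, hM⟩ := ((Icc 1 N).image fun u : ℕ => (u : ℝ) * Δ u).bddAbove
  refine ⟨max c M, le_max_left _ _, fun u hu1 huN => ?_⟩
  have hu0 : (0 : ℝ) < u := by exact_mod_cast hu1
  have : (u : ℝ) * Δ u ≤ M := hM (mem_image_of_mem _ (mem_Icc.mpr ⟨hu1, huN⟩))
  rw [le_div_iff₀ hu0]
  linarith [le_max_right c M]

end

theorem recursion_rate_general (Δ : ℕ → ℝ) (A B : ℝ) (hA : 0 ≤ A) (hB : 0 ≤ B)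
    (hrec : ∀ t : ℕ, 1 ≤ t →
      Δ (t + 1) ≤ Δ t - 2 / 3 * (2 / ((t : ℝ) + 1)) * Δ t
        + (2 / ((t : ℝ) + 1)) ^ 2 *
          (A + B * ((∑ u ∈ Finset.Icc 1 t, (u : ℝ))⁻¹ *
              ∑ u ∈ Finset.Icc 1 t, (u : ℝ) * Real.sqrt (Δ u)) ^ 2)) :
    ∃ G : ℝ, ∀ t : ℕ, 1 ≤ t → Δ t ≤ G / (t : ℝ) := by
  obtain ⟨N, hN⟩ := exists_nat_ge (96 * B)
  obtain ⟨G, hAG, hbase⟩ := exists_forall_Icc_le_div Δ (N + 1) (24 * A)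
  have hG : 0 ≤ G := by linarith
  suffices h : ∀ t u : ℕ, 1 ≤ u → u ≤ t → Δ u ≤ G / u from ⟨G, fun t ht => h t t ht le_rfl⟩
  intro t
  induction t with
  | zero => intro u hu hu0; omega
  | succ s ih =>
    intro u hu1 hus
    rcases Nat.lt_or_ge u (s + 1) with hlt | _
    · exact ih u hu1 (by omega)
    obtain rfl : u = s + 1 := by omega
    by_cases hsN : s + 1 ≤ N + 1
    · exact hbase _ hu1 hsN
    have hs : (1 : ℝ) ≤ s := by exact_mod_cast (by omega : 1 ≤ s)
    have hBs : 96 * B ≤ s := hN.trans (by exact_mod_cast (by omega : N ≤ s))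
    push_cast
    exact le_div_succ_of_recursion hs hB hG hAG hBs (ih s (by omega) le_rfl)
      (weightedSqrtMeanSq_le hG (by omega) ih) (hrec s (by omega))

/-- Recursion implies `O(1/t)` rate: if `(Δ_t)_{t ≥ 1}` is nonnegative, `θ_t = 2/(t+1)`,
and for all `t ≥ 1`, `Δ_{t+1} ≤ Δ_t − (2/3) θ_t Δ_t + θ_t² (A + B Δ̄_t)` with
`Δ̄_t = ((Σ_{u=1}^t u)⁻¹ Σ_{u=1}^t u √Δ_u)²`, then there is a constant `G` with
`Δ_t ≤ G / t` for all `t ≥ 1`. -/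
theorem recursion_rate (Δ : ℕ → ℝ) (A B : ℝ) (hA : 0 ≤ A) (hB : 0 ≤ B)
    (hnn : ∀ t : ℕ, 1 ≤ t → 0 ≤ Δ t)
    (hrec : ∀ t : ℕ, 1 ≤ t →
      Δ (t + 1) ≤ Δ t - 2 / 3 * (2 / ((t : ℝ) + 1)) * Δ t
        + (2 / ((t : ℝ) + 1)) ^ 2 *
          (A + B * ((∑ u ∈ Finset.Icc 1 t, (u : ℝ))⁻¹ *
              ∑ u ∈ Finset.Icc 1 t, (u : ℝ) * Real.sqrt (Δ u)) ^ 2)) :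
    ∃ G : ℝ, ∀ t : ℕ, 1 ≤ t → Δ t ≤ G / (t : ℝ) :=
  recursion_rate_general Δ A B hA hB hrec
end
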